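/- Special case of the addition formula (degenerate little q-Legendre case): for nonnegative integers l, p and all x, p_l(x;1,1;q)·(q^{1-p}x;q)_p = Σ_{m=0}^l (q^{m(m-l+p)} (q;q)_{l+m}/((q;q)_{l-m}(q;q)_m²)) · p_{l-m}(q^p;q^m,q^m;q) · (q^{1-p-m}x;q)_{p+m}. -/

import Mathlib

/-!
Since `(q^{1-p-m}x;q)_{p+m} = (q^{1-p-m}x;q)_m (q^{1-p}x;q)_p`, the factor `(q^{1-p}x;q)_p` splits
off and it remains to expand `p_l(x;1,1)` in the polynomials `(q^{1-p-m}x;q)_m`. Expanding each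
`(y;q)_m` by the finite q-binomial theorem and each `p_{l-m}(q^p;q^m,q^m)` by its defining sum gives
a triple sum over `(m, j, k)`. Writing `m = k + i` and `s = i + j`, its term factors as a function
of `(k, s)` times the coefficient of `a^i` in `(a;q)_s`; summing over `i` gives `(1;q)_s`, which
vanishes unless `s = 0`, and the surviving terms are exactly those of `p_l(x;1,1)`.
-/

/-- finite q-shifted factorial `(a;q)_k = ∏_{j=0}^{k-1} (1 - a q^j)` -/
noncomputable def qPoch (q a : ℝ) (k : ℕ) : ℝ := ∏ j ∈ Finset.range k, (1 - a * q ^ j)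

/-- little q-Jacobi polynomial `p_n(x;a,b;q) = ₂φ₁(q^{-n}, q^{n+1}ab; qa; q, qx)`. -/
noncomputable def littleqJacobi (q a b : ℝ) (n : ℕ) (x : ℝ) : ℝ :=
  ∑ k ∈ Finset.range (n + 1),
    qPoch q (q ^ (-(n : ℤ))) k * qPoch q (q ^ (n + 1) * a * b) k
      / (qPoch q (q * a) k * qPoch q q k) * (q * x) ^ k

open Finset

lemma two_mul_choose_two_add_self (k : ℕ) : 2 * k.choose 2 + k = k * k := by
  have h : (2 * k.choose 2 + k : ℚ) = k * k := by rw [Nat.cast_choose_two]; ring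
  exact_mod_cast h

lemma choose_two_add (a b : ℕ) : (a + b).choose 2 = a.choose 2 + b.choose 2 + a * b := by
  have h : ((a + b).choose 2 : ℚ) = a.choose 2 + b.choose 2 + a * b := by
    simp only [Nat.cast_choose_two]; push_cast; ring
  exact_mod_cast h

lemma sum_range_triangle_reindex {M : Type*} [AddCommMonoid M] (l : ℕ)
    (f : ℕ → ℕ → ℕ → M) :
    ∑ m ∈ range (l + 1), ∑ j ∈ range (l - m + 1), ∑ k ∈ range (m + 1), f m j k
      = ∑ k ∈ range (l + 1), ∑ s ∈ range (l - k + 1), ∑ i ∈ range (s + 1),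
          f (k + i) (s - i) k := by
  simp only [sum_sigma']
  refine sum_nbij' (fun a => ⟨a.2.2, a.2.1 + a.1 - a.2.2, a.1 - a.2.2⟩)
    (fun a => ⟨a.1 + a.2.2, a.2.1 - a.2.2, a.1⟩) ?_ ?_ ?_ ?_ ?_ <;>
  · rintro ⟨m, j, k⟩ h
    simp only [mem_sigma, mem_range, Sigma.mk.injEq, heq_eq_eq, and_true, true_and] at h ⊢
    first | omega | (congr! 1 <;> omega)

section QPochhammer

variable {q : ℝ}

@[simp] lemma qPoch_zero (a : ℝ) : qPoch q a 0 = 1 := prod_range_zero _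

lemma qPoch_succ (a : ℝ) (n : ℕ) : qPoch q a (n + 1) = qPoch q a n * (1 - a * q ^ n) :=
  prod_range_succ _ _

lemma qPoch_add (a : ℝ) (m n : ℕ) :
    qPoch q a (m + n) = qPoch q a m * qPoch q (a * q ^ m) n := by
  simp only [qPoch, prod_range_add, pow_add, mul_assoc]

lemma qPoch_succ' (a : ℝ) (n : ℕ) : qPoch q a (n + 1) = (1 - a) * qPoch q (a * q) n := by
  rw [add_comm, qPoch_add, pow_one, qPoch, prod_range_one, pow_zero, mul_one]

lemma qPoch_one_of_ne_zero {n : ℕ} (hn : n ≠ 0) : qPoch q 1 n = 0 :=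
  prod_eq_zero (mem_range.2 (Nat.pos_of_ne_zero hn)) (by simp)

lemma qPoch_self_ne_zero (hq0 : 0 < q) (hq1 : q ≠ 1) (n : ℕ) : qPoch q q n ≠ 0 :=
  prod_ne_zero_iff.2 fun j _ => by
    rw [← pow_succ', sub_ne_zero, ne_comm]
    exact (pow_eq_one_iff_of_nonneg hq0.le j.succ_ne_zero).not.2 hq1

lemma one_sub_pow_succ_ne_zero (hq0 : 0 < q) (hq1 : q ≠ 1) (n : ℕ) : 1 - q * q ^ n ≠ 0 := by
  have h := qPoch_self_ne_zero hq0 hq1 (n + 1)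
  rw [qPoch_succ] at h
  exact right_ne_zero_of_mul h

lemma qPoch_pow_succ (hq0 : 0 < q) (hq1 : q ≠ 1) (c j : ℕ) :
    qPoch q (q ^ (c + 1)) j = qPoch q q (c + j) / qPoch q q c := by
  rw [eq_div_iff (qPoch_self_ne_zero hq0 hq1 c), qPoch_add, pow_succ', mul_comm]

lemma qPoch_zpow_neg (hq0 : 0 < q) (hq1 : q ≠ 1) (d k : ℕ) :
    qPoch q (q ^ (-((d + k : ℕ) : ℤ))) k
      = (-1) ^ k * qPoch q q (d + k) / (qPoch q q d * q ^ (d * k + (k + 1).choose 2)) := by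
  have hq : q ≠ 0 := hq0.ne'
  simp only [zpow_neg, zpow_natCast]
  induction k with
  | zero => simp [qPoch_self_ne_zero hq0 hq1 d]
  | succ k ih =>
    have hshift : (q ^ (d + (k + 1)))⁻¹ * q = (q ^ (d + k))⁻¹ := by
      rw [← add_assoc, pow_succ, mul_inv, inv_mul_cancel_right₀ hq]
    rw [qPoch_succ', hshift, ih, ← add_assoc, qPoch_succ, Nat.choose_succ_succ' (k + 1) 1,
      Nat.choose_one_right]
    field_simp [qPoch_self_ne_zero hq0 hq1, one_sub_pow_succ_ne_zero hq0 hq1]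
    ring

end QPochhammer

section QBinomial

variable {q : ℝ}

noncomputable def qPochCoeff (q : ℝ) (n k : ℕ) : ℝ :=
  (-1) ^ k * q ^ k.choose 2 * qPoch q q n / (qPoch q q k * qPoch q q (n - k))

lemma qPochCoeff_zero_right (hq0 : 0 < q) (hq1 : q ≠ 1) (n : ℕ) : qPochCoeff q n 0 = 1 := by
  simp [qPochCoeff, qPoch_self_ne_zero hq0 hq1 n]

lemma qPochCoeff_self (hq0 : 0 < q) (hq1 : q ≠ 1) (n : ℕ) :
    qPochCoeff q n n = (-1) ^ n * q ^ n.choose 2 := by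
  simp [qPochCoeff, qPoch_self_ne_zero hq0 hq1 n]

lemma qPochCoeff_succ_succ (hq0 : 0 < q) (hq1 : q ≠ 1) {n k : ℕ} (hk : k < n) :
    qPochCoeff q (n + 1) (k + 1) = qPochCoeff q n (k + 1) - q ^ n * qPochCoeff q n k := by
  obtain ⟨e, rfl⟩ : ∃ e, n = k + e + 1 := ⟨n - k - 1, by omega⟩
  simp only [qPochCoeff, Nat.add_sub_add_right, Nat.add_sub_cancel_left,
    show k + e + 1 - k = e + 1 by omega, qPoch_succ, Nat.choose_succ_succ' k 1,
    Nat.choose_one_right]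
  field_simp [qPoch_self_ne_zero hq0 hq1, one_sub_pow_succ_ne_zero hq0 hq1]
  ring

theorem qPoch_eq_sum_qPochCoeff (hq0 : 0 < q) (hq1 : q ≠ 1) (a : ℝ) (n : ℕ) :
    qPoch q a n = ∑ k ∈ range (n + 1), qPochCoeff q n k * a ^ k := by
  induction n with
  | zero => simp [qPochCoeff_zero_right hq0 hq1]
  | succ n ih =>
    have hlast : qPochCoeff q (n + 1) (n + 1) = -(q ^ n * qPochCoeff q n n) := by
      rw [qPochCoeff_self hq0 hq1, qPochCoeff_self hq0 hq1, Nat.choose_succ_succ' n 1,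
        Nat.choose_one_right, pow_add]
      ring
    have hmid : ∀ k ∈ range n, qPochCoeff q (n + 1) (k + 1) * a ^ (k + 1)
        = qPochCoeff q n (k + 1) * a ^ (k + 1) - q ^ n * qPochCoeff q n k * a ^ (k + 1) :=
      fun k hk => by rw [qPochCoeff_succ_succ hq0 hq1 (mem_range.1 hk)]; ring
    have hprod : (∑ k ∈ range (n + 1), qPochCoeff q n k * a ^ k) * (1 - a * q ^ n)
        = ∑ k ∈ range (n + 1), qPochCoeff q n k * a ^ k
          - ∑ k ∈ range (n + 1), q ^ n * qPochCoeff q n k * a ^ (k + 1) := by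
      rw [sum_mul, ← sum_sub_distrib]
      exact sum_congr rfl fun k _ => by ring
    rw [qPoch_succ, ih, hprod, sum_range_succ' _ (n + 1),
      sum_range_succ (fun k => qPochCoeff q (n + 1) (k + 1) * a ^ (k + 1)), sum_congr rfl hmid,
      sum_sub_distrib, hlast, sum_range_succ' (fun k => qPochCoeff q n k * a ^ k),
      sum_range_succ (fun k => q ^ n * qPochCoeff q n k * a ^ (k + 1)),
      qPochCoeff_zero_right hq0 hq1, qPochCoeff_zero_right hq0 hq1]
    ring

lemma sum_qPochCoeff (hq0 : 0 < q) (hq1 : q ≠ 1) (n : ℕ) :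
    ∑ k ∈ range (n + 1), qPochCoeff q n k = if n = 0 then 1 else 0 := by
  have h := qPoch_eq_sum_qPochCoeff hq0 hq1 1 n
  simp only [one_pow, mul_one] at h
  rw [← h]
  split_ifs with hn
  · simp [hn]
  · exact qPoch_one_of_ne_zero hn

end QBinomial

section LittleQJacobi

variable {q : ℝ}

noncomputable def littleqJacobiTerm (q a b : ℝ) (n : ℕ) (x : ℝ) (k : ℕ) : ℝ :=
  qPoch q (q ^ (-(n : ℤ))) k * qPoch q (q ^ (n + 1) * a * b) k
    / (qPoch q (q * a) k * qPoch q q k) * (q * x) ^ k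

lemma littleqJacobi_eq_sum (q a b : ℝ) (n : ℕ) (x : ℝ) :
    littleqJacobi q a b n x = ∑ k ∈ range (n + 1), littleqJacobiTerm q a b n x k := rfl

lemma littleqJacobiTerm_pow_pow (hq0 : 0 < q) (hq1 : q ≠ 1) (m d k : ℕ) (y : ℝ) :
    littleqJacobiTerm q (q ^ m) (q ^ m) (d + k) y k
      = (-1) ^ k * y ^ k / q ^ (d * k + k.choose 2)
        * (qPoch q q (d + k) * qPoch q q (2 * m + d + 2 * k) * qPoch q q m
          / (qPoch q q d * qPoch q q (2 * m + d + k) * qPoch q q (m + k) * qPoch q q k)) := by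
  rw [littleqJacobiTerm, qPoch_zpow_neg hq0 hq1,
    show q ^ (d + k + 1) * q ^ m * q ^ m = q ^ (2 * m + d + k + 1) by ring,
    qPoch_pow_succ hq0 hq1, ← pow_succ', qPoch_pow_succ hq0 hq1, Nat.choose_succ_succ' k 1,
    Nat.choose_one_right, show 2 * m + d + k + k = 2 * m + d + 2 * k by ring]
  field_simp [qPoch_self_ne_zero hq0 hq1]
  ring

end LittleQJacobi

section AdditionFormula

variable {q : ℝ}

noncomputable def additionCoeff (q : ℝ) (l p m : ℕ) : ℝ :=
  q ^ ((m : ℤ) * ((m : ℤ) - l + p)) * qPoch q q (l + m) / (qPoch q q (l - m) * qPoch q q m ^ 2)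

noncomputable def regroupedTerm (q : ℝ) (p : ℕ) (x : ℝ) (k s d : ℕ) : ℝ :=
  (-1) ^ (s + k) * q ^ (s * p) / q ^ (k * s + k * d + d * s + s.choose 2 + k.choose 2)
    * (qPoch q q (2 * k + 2 * s + d)
      / (qPoch q q d * qPoch q q (k + s) * qPoch q q k * qPoch q q s))
    * x ^ k

lemma littleqJacobiTerm_one_one (hq0 : 0 < q) (hq1 : q ≠ 1) (p d k : ℕ) (x : ℝ) :
    littleqJacobiTerm q 1 1 (d + k) x k = regroupedTerm q p x k 0 d := by
  rw [← pow_zero q, littleqJacobiTerm_pow_pow hq0 hq1, regroupedTerm]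
  simp only [mul_zero, add_zero, zero_add, zero_mul, pow_zero, Nat.choose_zero_succ, qPoch_zero]
  field_simp [qPoch_self_ne_zero hq0 hq1]
  ring_nf

lemma additionCoeff_mul_terms (hq0 : 0 < q) (hq1 : q ≠ 1) (p k i j d : ℕ) (x : ℝ) :
    additionCoeff q (k + (i + j + d)) p (k + i)
        * littleqJacobiTerm q (q ^ (k + i)) (q ^ (k + i)) (d + j) (q ^ p) j
        * (qPochCoeff q (k + i) k * (q ^ ((1 : ℤ) - p - (k + i : ℕ)) * x) ^ k)
      = regroupedTerm q p x k (i + j) d * qPochCoeff q (i + j) i := by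
  have hq : q ≠ 0 := hq0.ne'
  have hcoeff : q ^ (((k + i : ℕ) : ℤ) * ((k + i : ℕ) - (k + (i + j + d) : ℕ) + p))
      = q ^ ((k + i) * p) / q ^ ((k + i) * (j + d)) := by
    rw [← zpow_natCast_sub_natCast₀ hq]
    push_cast
    ring_nf
  have hpow : (q ^ ((1 : ℤ) - p - (k + i : ℕ)) * x) ^ k
      = x ^ k / q ^ (p * k + i * k + 2 * k.choose 2) := by
    rw [mul_pow, ← zpow_natCast (q ^ _) k, ← zpow_mul, div_eq_mul_inv, mul_comm,
      ← zpow_natCast q, ← zpow_neg]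
    congr 2
    have h := two_mul_choose_two_add_self k
    zify at h
    push_cast
    linear_combination h
  rw [additionCoeff, hcoeff, hpow, littleqJacobiTerm_pow_pow hq0 hq1, regroupedTerm, qPochCoeff,
    qPochCoeff, choose_two_add,
    show k + (i + j + d) - (k + i) = d + j by omega, show k + i - k = i by omega,
    show i + j - i = j by omega]
  field_simp [qPoch_self_ne_zero hq0 hq1]
  ring_nf
  rw [pow_mul' (-1 : ℝ) i 2, neg_one_sq, one_pow, mul_one]

theorem littleqJacobi_one_one_eq_sum (hq0 : 0 < q) (hq1 : q ≠ 1) (l p : ℕ) (x : ℝ) :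
    littleqJacobi q 1 1 l x
      = ∑ m ∈ range (l + 1),
          additionCoeff q l p m * littleqJacobi q (q ^ m) (q ^ m) (l - m) (q ^ p)
            * qPoch q (q ^ ((1 : ℤ) - p - m) * x) m := by
  have hexpand : ∀ m ∈ range (l + 1),
      additionCoeff q l p m * littleqJacobi q (q ^ m) (q ^ m) (l - m) (q ^ p)
          * qPoch q (q ^ ((1 : ℤ) - p - m) * x) m
        = ∑ j ∈ range (l - m + 1), ∑ k ∈ range (m + 1),
            additionCoeff q l p m * littleqJacobiTerm q (q ^ m) (q ^ m) (l - m) (q ^ p) j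
              * (qPochCoeff q m k * (q ^ ((1 : ℤ) - p - m) * x) ^ k) := fun m _ => by
    rw [littleqJacobi_eq_sum, qPoch_eq_sum_qPochCoeff hq0 hq1, mul_sum (range (l - m + 1)),
      sum_mul_sum]
  rw [sum_congr rfl hexpand, sum_range_triangle_reindex, littleqJacobi_eq_sum]
  refine sum_congr rfl fun k hk => ?_
  obtain ⟨n, rfl⟩ : ∃ n, l = k + n := ⟨l - k, by have := mem_range.1 hk; omega⟩
  calc littleqJacobiTerm q 1 1 (k + n) x k
      = ∑ s ∈ range (n + 1),
          regroupedTerm q p x k s (n - s) * ∑ i ∈ range (s + 1), qPochCoeff q s i := by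
        simp [sum_qPochCoeff hq0 hq1, add_comm k n, littleqJacobiTerm_one_one hq0 hq1 p]
    _ = _ := by
        simp only [mul_sum, Nat.add_sub_cancel_left]
        refine sum_congr rfl fun s hs => sum_congr rfl fun i hi => ?_
        obtain ⟨j, rfl⟩ : ∃ j, s = i + j := ⟨s - i, by have := mem_range.1 hi; omega⟩
        obtain ⟨d, rfl⟩ : ∃ d, n = i + j + d :=
          ⟨n - (i + j), by have := mem_range.1 hs; omega⟩
        rw [← additionCoeff_mul_terms hq0 hq1, Nat.add_sub_cancel_left, Nat.add_sub_cancel_left,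
          show k + (i + j + d) - (k + i) = d + j by omega]

end AdditionFormula

/-- Degenerate (little q-Legendre) special case of the addition formula. -/
theorem little_qLegendre_addition_special_case (q : ℝ) (hq0 : 0 < q) (hq1 : q < 1)
    (l p : ℕ) (x : ℝ) :
    littleqJacobi q 1 1 l x * qPoch q (q ^ ((1 : ℤ) - p) * x) p
      = ∑ m ∈ Finset.range (l + 1),
          q ^ ((m : ℤ) * ((m : ℤ) - l + p)) * qPoch q q (l + m)
            / (qPoch q q (l - m) * (qPoch q q m) ^ 2)
            * littleqJacobi q (q ^ m) (q ^ m) (l - m) (q ^ p)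
            * qPoch q (q ^ ((1 : ℤ) - p - m) * x) (p + m) := by
  rw [littleqJacobi_one_one_eq_sum hq0 hq1.ne l p x, sum_mul]
  refine sum_congr rfl fun m _ => ?_
  have hshift : q ^ ((1 : ℤ) - p - m) * x * q ^ m = q ^ ((1 : ℤ) - p) * x := by
    rw [mul_right_comm, ← zpow_natCast, ← zpow_add₀ hq0.ne', sub_add_cancel]
  rw [add_comm p m, qPoch_add (q ^ ((1 : ℤ) - p - m) * x) m p, hshift, additionCoeff]
  ring
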